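/- For all natural numbers m and n, the following identity holds in H: A^n * B^m = Σ_{k=0}^{min(m,n)} (m choose k) * (n choose k) * k! * B^(m-k) * A^(n-k), where the binomial coefficients and factorial are natural numbers acting by scalar multiplication. -/
import Mathlib


noncomputable section

inductive HWRel (F : Type) [Field F] :
    FreeAlgebra F (Fin 2) → FreeAlgebra F (Fin 2) → Prop
  | comm : HWRel F (FreeAlgebra.ι F 0 * FreeAlgebra.ι F 1)
      (FreeAlgebra.ι F 1 * FreeAlgebra.ι F 0 + 1)

abbrev HW (F : Type) [Field F] := RingQuot (HWRel F)

def HW.A (F : Type) [Field F] : HW F :=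
  RingQuot.mkAlgHom F (HWRel F) (FreeAlgebra.ι F 0)

def HW.B (F : Type) [Field F] : HW F :=
  RingQuot.mkAlgHom F (HWRel F) (FreeAlgebra.ι F 1)

lemma hw_comm (F : Type) [Field F] : HW.A F * HW.B F = HW.B F * HW.A F + 1 := by
  have h := RingQuot.mkAlgHom_rel F (HWRel.comm (F := F))
  simpa only [map_mul, map_add, map_one, HW.A, HW.B] using h

lemma hw_commB (F : Type) [Field F] :
    ∀ j : ℕ, HW.A F * HW.B F ^ j = HW.B F ^ j * HW.A F + j • HW.B F ^ (j - 1) := by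
  intro j
  induction j with
  | zero => simp
  | succ m ih =>
    cases m with
    | zero => simpa using hw_comm F
    | succ m' =>
      have h1 : HW.A F * HW.B F ^ (m' + 2) = (HW.A F * HW.B F ^ (m' + 1)) * HW.B F := by
        rw [pow_succ, ← mul_assoc]
      rw [h1, ih]
      simp only [Nat.add_sub_cancel]
      rw [add_mul, smul_mul_assoc, mul_assoc, hw_comm, ← pow_succ]
      rw [mul_add, mul_one, ← mul_assoc, ← pow_succ]
      rw [add_assoc]
      congr 1
      module

lemma hw_coeff (m n k : ℕ) :
    m.choose (k+1) * n.choose (k+1) * (k+1).factorial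
      + m.choose k * n.choose k * k.factorial * (m - k)
    = m.choose (k+1) * (n+1).choose (k+1) * (k+1).factorial := by
  have h : m.choose (k+1) * (k+1) = m.choose k * (m - k) := Nat.choose_succ_right_eq m k
  have key : m.choose (k+1) * n.choose k * (k+1).factorial
      = m.choose k * n.choose k * k.factorial * (m - k) := by
    rw [Nat.factorial_succ]
    calc m.choose (k+1) * n.choose k * ((k+1) * k.factorial)
        = (m.choose (k+1) * (k+1)) * (n.choose k * k.factorial) := by ring
      _ = (m.choose k * (m - k)) * (n.choose k * k.factorial) := by rw [h]
      _ = m.choose k * n.choose k * k.factorial * (m - k) := by ring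
  rw [Nat.choose_succ_succ n k, Nat.mul_add, Nat.add_mul, key]
  simp only [Nat.succ_eq_add_one]
  omega

lemma hw_main (F : Type) [Field F] :
    ∀ n m : ℕ, HW.A F ^ n * HW.B F ^ m =
      ∑ k ∈ Finset.range (n + 1),
        (m.choose k * n.choose k * k.factorial) •
          (HW.B F ^ (m - k) * HW.A F ^ (n - k)) := by
  intro n
  induction n with
  | zero => intro m; simp
  | succ n ih =>
    intro m
    have step1 : ∀ k ∈ Finset.range (n+1),
        HW.A F * ((m.choose k * n.choose k * k.factorial) •
            (HW.B F ^ (m-k) * HW.A F ^ (n-k)))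
        = (m.choose k * n.choose k * k.factorial) •
            (HW.B F ^ (m-k) * HW.A F ^ (n+1-k))
          + (m.choose k * n.choose k * k.factorial * (m-k)) •
            (HW.B F ^ (m-(k+1)) * HW.A F ^ (n-k)) := by
      intro k hk
      have hk' : k ≤ n := Nat.lt_succ_iff.mp (Finset.mem_range.mp hk)
      have e1 : n - k + 1 = n + 1 - k := by omega
      have e2 : m - k - 1 = m - (k+1) := by omega
      rw [mul_smul_comm, ← mul_assoc, hw_commB, add_mul, smul_mul_assoc, smul_add,
        smul_smul, mul_assoc (HW.B F ^ (m-k)), ← pow_succ', e1, e2]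
    have lhs_eq : HW.A F ^ (n+1) * HW.B F ^ m
        = (∑ k ∈ Finset.range (n+1), (m.choose k * n.choose k * k.factorial) •
              (HW.B F ^ (m-k) * HW.A F ^ (n+1-k)))
          + ∑ k ∈ Finset.range (n+1), (m.choose k * n.choose k * k.factorial * (m-k)) •
              (HW.B F ^ (m-(k+1)) * HW.A F ^ (n-k)) := by
      calc HW.A F ^ (n+1) * HW.B F ^ m
          = HW.A F * (HW.A F ^ n * HW.B F ^ m) := by rw [pow_succ', mul_assoc]
        _ = ∑ k ∈ Finset.range (n+1),
              ((m.choose k * n.choose k * k.factorial) •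
                  (HW.B F ^ (m-k) * HW.A F ^ (n+1-k))
                + (m.choose k * n.choose k * k.factorial * (m-k)) •
                  (HW.B F ^ (m-(k+1)) * HW.A F ^ (n-k))) := by
            rw [ih m, Finset.mul_sum]
            exact Finset.sum_congr rfl step1
        _ = _ := Finset.sum_add_distrib
    have hS1 : (∑ k ∈ Finset.range (n+1), (m.choose k * n.choose k * k.factorial) •
            (HW.B F ^ (m-k) * HW.A F ^ (n+1-k)))
        = (∑ k ∈ Finset.range (n+1),
              (m.choose (k+1) * n.choose (k+1) * (k+1).factorial) •
                (HW.B F ^ (m-(k+1)) * HW.A F ^ (n-k)))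
          + HW.B F ^ m * HW.A F ^ (n+1) := by
      rw [Finset.sum_range_succ' (fun k => (m.choose k * n.choose k * k.factorial) •
            (HW.B F ^ (m-k) * HW.A F ^ (n+1-k))) n]
      rw [Finset.sum_range_succ (fun k =>
            (m.choose (k+1) * n.choose (k+1) * (k+1).factorial) •
              (HW.B F ^ (m-(k+1)) * HW.A F ^ (n-k))) n]
      simp [Nat.add_sub_add_right, Nat.choose_succ_self]
    have hterm : ∀ k ∈ Finset.range (n+1),
        (m.choose (k+1) * (n+1).choose (k+1) * (k+1).factorial) •
            (HW.B F ^ (m-(k+1)) * HW.A F ^ (n-k))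
        = (m.choose (k+1) * n.choose (k+1) * (k+1).factorial) •
            (HW.B F ^ (m-(k+1)) * HW.A F ^ (n-k))
          + (m.choose k * n.choose k * k.factorial * (m-k)) •
            (HW.B F ^ (m-(k+1)) * HW.A F ^ (n-k)) := by
      intro k _
      rw [← hw_coeff, add_smul]
    have rhs_eq : (∑ k ∈ Finset.range (n+1+1),
          (m.choose k * (n+1).choose k * k.factorial) •
            (HW.B F ^ (m-k) * HW.A F ^ (n+1-k)))
        = (∑ k ∈ Finset.range (n+1), (m.choose k * n.choose k * k.factorial) •
              (HW.B F ^ (m-k) * HW.A F ^ (n+1-k)))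
          + ∑ k ∈ Finset.range (n+1), (m.choose k * n.choose k * k.factorial * (m-k)) •
              (HW.B F ^ (m-(k+1)) * HW.A F ^ (n-k)) := by
      rw [Finset.sum_range_succ']
      simp only [Nat.add_sub_add_right, Nat.choose_zero_right, Nat.factorial_zero,
        mul_one, one_mul, Nat.sub_zero, one_smul]
      rw [Finset.sum_congr rfl hterm, Finset.sum_add_distrib, hS1]
      abel
    rw [lhs_eq, rhs_eq]

/-- The reordering formula in the Heisenberg–Weyl algebra:
`A^n * B^m = Σ_{k=0}^{min(m,n)} (m choose k)(n choose k) k! B^(m-k) A^(n-k)`. -/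
theorem hw_reordering (F : Type) [Field F] [CharZero F] :
    ∀ m n : ℕ, HW.A F ^ n * HW.B F ^ m =
      ∑ k ∈ Finset.range (min m n + 1),
        (m.choose k * n.choose k * Nat.factorial k) •
          (HW.B F ^ (m - k) * HW.A F ^ (n - k)) := by
  intro m n
  rw [hw_main F n m]
  refine (Finset.sum_subset ?_ ?_).symm
  · intro x hx
    simp only [Finset.mem_range] at hx ⊢
    omega
  · intro x hx hx'
    simp only [Finset.mem_range] at hx hx'
    have hm : m < x := by omega
    simp [Nat.choose_eq_zero_of_lt hm]
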